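/- Let 1 < p < ∞ and let Y be a Banach space containing a normalized sequence (y_n) with upper p-estimates. Then there exists a bounded linear operator T from G = d_*((1/n)_{n∈ℕ}) into Y such that ‖T e_n‖ = 1 for every n ∈ ℕ, where (e_n) is the unit vector basis of G. -/

import Mathlib

open Filter Topology

/-- `rearrSum x n = ∑_{k=1}^n x̃_k`, the sum of the `n` largest values of `(|x_k|)`,
i.e. the `n`-th partial sum of the nonincreasing rearrangement of `(|x_k|)`; it is the
supremum of `∑_{k ∈ A} |x_k|` over finite sets `A ⊆ ℕ` of cardinality `n`. -/
noncomputable def rearrSum (x : ℕ → ℝ) (n : ℕ) : ℝ :=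
  sSup ((fun A : Finset ℕ => ∑ k ∈ A, |x k|) '' {A : Finset ℕ | A.card = n})

/-- A sequence of positive reals is admissible if it is nonincreasing, starts at `1`,
tends to `0` and is not summable. -/
def Admissible (w : ℕ → ℝ) : Prop :=
  (∀ n, 0 < w n) ∧ (∀ n, w (n + 1) ≤ w n) ∧ w 0 = 1 ∧
    Tendsto w atTop (𝓝 0) ∧ ¬ Summable w

/-- The underlying set of sequences of `d_*(w)`: sequences `x ∈ c₀` with
`(∑_{k=1}^n x̃_k) / (∑_{k=1}^n w_k) → 0`. -/
def dStarSet (w : ℕ → ℝ) : Set (ℕ → ℝ) :=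
  {x | Tendsto x atTop (𝓝 0) ∧
    Tendsto (fun n => rearrSum x n / ∑ k ∈ Finset.range n, w k) atTop (𝓝 0)}

/-- The norm of `d_*(w)`: `‖x‖ = sup_n (∑_{k=1}^n x̃_k) / (∑_{k=1}^n w_k)`. -/
noncomputable def dStarNorm (w : ℕ → ℝ) (x : ℕ → ℝ) : ℝ :=
  ⨆ n : ℕ, rearrSum x n / ∑ k ∈ Finset.range n, w k

/-- A normed space `D` is a representation of `d_*(w)` if there is a linear bijection `j`
from `D` onto the set of sequences of `d_*(w)` carrying the norm of `D` to the norm of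
`d_*(w)`; i.e. `D` "is" the space `d_*(w)` endowed with its canonical norm. -/
def IsDStarRep (w : ℕ → ℝ) (D : Type*) [NormedAddCommGroup D] [NormedSpace ℝ D]
    (j : D →ₗ[ℝ] (ℕ → ℝ)) : Prop :=
  Function.Injective j ∧ Set.range j = dStarSet w ∧ ∀ x : D, ‖x‖ = dStarNorm w (j x)

/-- `(y n)` is a basic sequence: it is a Schauder basis of the closed linear span of its
range, i.e. every element of that closed span has a unique representation as a norm
convergent series `∑ aₖ yₖ`. -/
def IsBasicSeq {Y : Type*} [NormedAddCommGroup Y] [NormedSpace ℝ Y] (y : ℕ → Y) : Prop :=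
  ∀ x ∈ closure ((Submodule.span ℝ (Set.range y) : Submodule ℝ Y) : Set Y),
    ∃! a : ℕ → ℝ,
      Filter.Tendsto (fun n => ∑ k ∈ Finset.range n, a k • y k) Filter.atTop (nhds x)

/-- Two sequences are equivalent if a series `∑ aₖ yₖ` converges exactly when the
series `∑ aₖ zₖ` converges. -/
def SeqEquivalent {Y Z : Type*} [NormedAddCommGroup Y] [NormedSpace ℝ Y]
    [NormedAddCommGroup Z] [NormedSpace ℝ Z] (y : ℕ → Y) (z : ℕ → Z) : Prop :=
  ∀ a : ℕ → ℝ,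
    (∃ x : Y, Filter.Tendsto (fun n => ∑ k ∈ Finset.range n, a k • y k)
      Filter.atTop (nhds x)) ↔
    (∃ x : Z, Filter.Tendsto (fun n => ∑ k ∈ Finset.range n, a k • z k)
      Filter.atTop (nhds x))

/-- `(y n)` is a symmetric basic sequence: it is basic and every permutation of it is a
basic sequence equivalent to it. -/
def IsSymmetricBasicSeq {Y : Type*} [NormedAddCommGroup Y] [NormedSpace ℝ Y]
    (y : ℕ → Y) : Prop :=
  IsBasicSeq y ∧ ∀ σ : Equiv.Perm ℕ, IsBasicSeq (y ∘ σ) ∧ SeqEquivalent (y ∘ σ) y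

/-- `(y n)` is equivalent to the unit vector basis of `ℓ₁`: there is `c > 0` with
`‖∑ aₖ yₖ‖ ≥ c ∑ |aₖ|` for all finitely supported scalars. -/
def EquivL1UnitBasis {Y : Type*} [NormedAddCommGroup Y] [NormedSpace ℝ Y]
    (y : ℕ → Y) : Prop :=
  ∃ c : ℝ, 0 < c ∧ ∀ (n : ℕ) (a : ℕ → ℝ),
    c * ∑ k ∈ Finset.range n, |a k| ≤ ‖∑ k ∈ Finset.range n, a k • y k‖

/-- A normalized sequence `(y n)` has upper `p`-estimates if there is `C > 0` with
`‖∑_{k=1}^n aₖ yₖ‖ ≤ C (∑_{k=1}^n |aₖ|^p)^(1/p)` for all `n` and all scalars. -/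
def HasUpperPEstimates {Y : Type*} [NormedAddCommGroup Y] [NormedSpace ℝ Y]
    (p : ℝ) (y : ℕ → Y) : Prop :=
  ∃ C : ℝ, 0 < C ∧ ∀ (n : ℕ) (a : ℕ → ℝ),
    ‖∑ k ∈ Finset.range n, a k • y k‖ ≤
      C * (∑ k ∈ Finset.range n, |a k| ^ p) ^ (1 / p)

/-! Elements of `G` have coefficients in `ℓ_p` for every `p > 1`: if `‖x‖ ≤ 1`, the sum of any
`m` of the numbers `|x_k|` is at most `H_m = ∑_{k ≤ m} 1/k ≤ 1 + log m`, so the `m`-th largest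
coefficient is at most `H_m / m`, and `∑_m (H_m / m)^p < ∞`. Composing this bounded inclusion
`G → ℓ_p` with the map `ℓ_p → Y`, `e_k ↦ y_k`, which the upper `p`-estimate makes bounded,
gives `T`. -/

open Finset

theorem sum_rpow_le_sum_range_div_rpow {ι : Type*} [DecidableEq ι] {f : ι → ℝ}
    (hf : ∀ i, 0 ≤ f i) {Φ : ℕ → ℝ} (hΦ : ∀ s : Finset ι, s.Nonempty → ∑ i ∈ s, f i ≤ Φ #s)
    {p : ℝ} (hp : 0 ≤ p) (s : Finset ι) :
    ∑ i ∈ s, f i ^ p ≤ ∑ m ∈ range #s, (Φ (m + 1) / (m + 1)) ^ p := by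
  induction hn : #s generalizing s with
  | zero => simp [card_eq_zero.mp hn]
  | succ n ih =>
    have hs : s.Nonempty := card_pos.mp (by omega)
    obtain ⟨i₀, hi₀, hmin⟩ := s.exists_min_image f hs
    have hfi₀ : f i₀ ≤ Φ (n + 1) / (n + 1) := by
      rw [le_div_iff₀ (by positivity)]
      calc f i₀ * (n + 1) = ∑ _i ∈ s, f i₀ := by simp [hn, mul_comm]
        _ ≤ ∑ i ∈ s, f i := sum_le_sum hmin
        _ ≤ Φ (n + 1) := by simpa [hn] using hΦ s hs
    rw [← add_sum_erase s _ hi₀, sum_range_succ, add_comm]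
    gcongr
    · exact ih _ (by rw [card_erase_of_mem hi₀, hn]; rfl)
    · exact hf i₀

theorem sum_abs_le_rearrSum {u : ℕ → ℝ} (hu : BddAbove (Set.range fun k => |u k|))
    (s : Finset ℕ) : ∑ k ∈ s, |u k| ≤ rearrSum u #s := by
  obtain ⟨B, hB⟩ := hu
  refine le_csSup ⟨#s * B, ?_⟩ ⟨s, rfl, rfl⟩
  rintro _ ⟨A, hA, rfl⟩
  calc ∑ k ∈ A, |u k| ≤ ∑ _k ∈ A, B := sum_le_sum fun k _ => hB ⟨k, rfl⟩
    _ = #s * B := by simp [hA.out]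

theorem dStarNorm_nonneg {w : ℕ → ℝ} (hw : ∀ n, 0 ≤ w n) (u : ℕ → ℝ) :
    0 ≤ dStarNorm w u :=
  Real.iSup_nonneg fun _ => div_nonneg
    (Real.sSup_nonneg <| by rintro _ ⟨A, -, rfl⟩; positivity) (sum_nonneg fun k _ => hw k)

theorem sum_abs_le_dStarNorm_mul {w : ℕ → ℝ} (hw : ∀ n, 0 < w n) {u : ℕ → ℝ}
    (hu : u ∈ dStarSet w) {s : Finset ℕ} (hs : s.Nonempty) :
    ∑ k ∈ s, |u k| ≤ dStarNorm w u * ∑ k ∈ range #s, w k := by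
  have hW : 0 < ∑ k ∈ range #s, w k := sum_pos (fun k _ => hw k) (by simpa using hs.ne_empty)
  calc ∑ k ∈ s, |u k| ≤ rearrSum u #s :=
        sum_abs_le_rearrSum (by simpa using hu.1.abs.bddAbove_range) s
    _ ≤ dStarNorm w u * ∑ k ∈ range #s, w k := by
        rw [← div_le_iff₀ hW]
        exact le_ciSup hu.2.bddAbove_range #s

theorem sum_abs_rpow_le_of_mem_dStarSet {w : ℕ → ℝ} (hw : ∀ n, 0 < w n) {u : ℕ → ℝ}
    (hu : u ∈ dStarSet w) {p : ℝ} (hp : 0 ≤ p) (s : Finset ℕ) :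
    ∑ k ∈ s, |u k| ^ p ≤
      dStarNorm w u ^ p * ∑ m ∈ range #s, ((∑ k ∈ range (m + 1), w k) / (m + 1)) ^ p := by
  have hM := dStarNorm_nonneg (fun n => (hw n).le) u
  calc ∑ k ∈ s, |u k| ^ p
      ≤ ∑ m ∈ range #s, (dStarNorm w u * (∑ k ∈ range (m + 1), w k) / (m + 1)) ^ p :=
        sum_rpow_le_sum_range_div_rpow (fun k => abs_nonneg (u k))
          (Φ := fun n => dStarNorm w u * ∑ k ∈ range n, w k)
          (fun _ hs => sum_abs_le_dStarNorm_mul hw hu hs) hp s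
    _ = _ := by
        rw [mul_sum]
        refine sum_congr rfl fun m _ => ?_
        rw [mul_div_assoc, Real.mul_rpow hM]
        exact div_nonneg (sum_nonneg fun k _ => (hw k).le) (by positivity)

theorem sum_range_one_div_add_one_le_one_add_log (n : ℕ) :
    ∑ k ∈ range n, 1 / ((k : ℝ) + 1) ≤ 1 + Real.log n := by
  simpa [harmonic] using harmonic_le_one_add_log n

theorem one_add_log_le_mul_rpow {ε t : ℝ} (hε : 0 < ε) (ht : 1 ≤ t) :
    1 + Real.log t ≤ (1 + 1 / ε) * t ^ ε := by
  have h1 : 1 ≤ t ^ ε := Real.one_le_rpow ht hε.le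
  have hlog : Real.log t ≤ t ^ ε / ε := Real.log_le_rpow_div (by linarith) hε
  calc 1 + Real.log t ≤ t ^ ε + t ^ ε / ε := by linarith
    _ = (1 + 1 / ε) * t ^ ε := by ring

theorem summable_harmonic_div_rpow {p : ℝ} (hp : 1 < p) :
    Summable fun m : ℕ => ((∑ k ∈ range (m + 1), 1 / ((k : ℝ) + 1)) / (m + 1)) ^ p := by
  set ε := (p - 1) / (2 * p)
  have hε : 0 < ε := by positivity
  have hexp : (ε - 1) * p < -1 := by
    have : (ε - 1) * p = -(p + 1) / 2 := by simp only [ε]; field_simp; ring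
    linarith
  have hsum : Summable fun m : ℕ => ((m : ℝ) + 1) ^ ((ε - 1) * p) := by
    simpa using (summable_nat_add_iff 1).mpr (Real.summable_nat_rpow.mpr hexp)
  refine (hsum.mul_left ((1 + 1 / ε) ^ p)).of_nonneg_of_le (fun m => by positivity) fun m => ?_
  have ht : (1 : ℝ) ≤ m + 1 := by simp
  have ht0 : (0 : ℝ) < m + 1 := by positivity
  calc ((∑ k ∈ range (m + 1), 1 / ((k : ℝ) + 1)) / (m + 1)) ^ p
      ≤ ((1 + 1 / ε) * ((m : ℝ) + 1) ^ (ε - 1)) ^ p := by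
        gcongr
        rw [Real.rpow_sub_one ht0.ne', mul_div_assoc', div_le_div_iff_of_pos_right ht0]
        calc ∑ k ∈ range (m + 1), 1 / ((k : ℝ) + 1) ≤ 1 + Real.log (m + 1) := by
              simpa using sum_range_one_div_add_one_le_one_add_log (m + 1)
          _ ≤ _ := one_add_log_le_mul_rpow hε ht
    _ = (1 + 1 / ε) ^ p * ((m : ℝ) + 1) ^ ((ε - 1) * p) := by
        rw [Real.mul_rpow (by positivity) (by positivity), Real.rpow_mul ht0.le]

section UpperEstimates

variable {Y : Type*} [NormedAddCommGroup Y] [NormedSpace ℝ Y] {p : ℝ} {y : ℕ → Y}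

theorem HasUpperPEstimates.exists_norm_sum_finset_le (hup : HasUpperPEstimates p y)
    (hp : p ≠ 0) :
    ∃ C, 0 < C ∧ ∀ (s : Finset ℕ) (a : ℕ → ℝ),
      ‖∑ k ∈ s, a k • y k‖ ≤ C * (∑ k ∈ s, |a k| ^ p) ^ (1 / p) := by
  classical
  obtain ⟨C, hC, hCy⟩ := hup
  refine ⟨C, hC, fun s a => ?_⟩
  obtain ⟨n, hsn⟩ := s.exists_nat_subset_range
  have hextend := hCy n fun k => if k ∈ s then a k else 0
  simp only [ite_smul, zero_smul, apply_ite (|·| ^ p), abs_zero, Real.zero_rpow hp,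
    sum_ite_mem, inter_eq_right.mpr hsn] at hextend
  exact hextend

theorem summable_smul_of_summable_abs_rpow [CompleteSpace Y] (hp : 0 < p) {C : ℝ}
    (hC : ∀ (s : Finset ℕ) (a : ℕ → ℝ),
      ‖∑ k ∈ s, a k • y k‖ ≤ C * (∑ k ∈ s, |a k| ^ p) ^ (1 / p))
    {a : ℕ → ℝ} (ha : Summable fun k => |a k| ^ p) : Summable fun k => a k • y k := by
  have hcont : Tendsto (fun z : ℝ => C * z ^ (1 / p)) (𝓝 0) (𝓝 0) := by
    simpa [Real.zero_rpow (inv_ne_zero hp.ne')] using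
      ((Real.continuousAt_rpow_const 0 (1 / p) (Or.inr (by positivity))).const_mul C).tendsto
  rw [summable_iff_vanishing_norm]
  intro ε hε
  obtain ⟨s, hs⟩ := summable_iff_vanishing.mp ha _ (hcont (Iio_mem_nhds hε))
  exact ⟨s, fun t ht => (hC t a).trans_lt (hs t ht)⟩

theorem exists_clm_hasSum_of_hasUpperPEstimates [CompleteSpace Y] (hp : 0 < p)
    (hup : HasUpperPEstimates p y) {D : Type*} [NormedAddCommGroup D] [NormedSpace ℝ D]
    (j : D →ₗ[ℝ] (ℕ → ℝ)) {K : ℝ}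
    (hK : ∀ (x : D) (s : Finset ℕ), (∑ k ∈ s, |j x k| ^ p) ^ (1 / p) ≤ K * ‖x‖) :
    ∃ T : D →L[ℝ] Y, ∀ x, HasSum (fun k => j x k • y k) (T x) := by
  obtain ⟨C, hC, hCy⟩ := hup.exists_norm_sum_finset_le hp.ne'
  have hsum (x : D) : Summable fun k => j x k • y k := by
    refine summable_smul_of_summable_abs_rpow hp hCy
      (summable_of_sum_le (c := (K * ‖x‖) ^ p) (fun k => by positivity) fun s => ?_)
    calc ∑ k ∈ s, |j x k| ^ p = ((∑ k ∈ s, |j x k| ^ p) ^ (1 / p)) ^ p := by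
          rw [one_div, Real.rpow_inv_rpow (by positivity) hp.ne']
      _ ≤ (K * ‖x‖) ^ p := by gcongr; exact hK x s
  let T : D →ₗ[ℝ] Y :=
    { toFun := fun x => ∑' k, j x k • y k
      map_add' := fun x x' => by
        simp only [map_add, Pi.add_apply, add_smul]
        exact (hsum x).tsum_add (hsum x')
      map_smul' := fun c x => by
        simp only [map_smul, Pi.smul_apply, smul_eq_mul, mul_smul, RingHom.id_apply]
        exact (hsum x).tsum_const_smul c }
  refine ⟨T.mkContinuous (C * K) fun x => ?_, fun x => (hsum x).hasSum⟩
  refine le_of_tendsto' (hsum x).hasSum.norm fun s => ?_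
  calc ‖∑ k ∈ s, j x k • y k‖ ≤ C * (∑ k ∈ s, |j x k| ^ p) ^ (1 / p) := hCy s (j x)
    _ ≤ C * K * ‖x‖ := by rw [mul_assoc]; gcongr; exact hK x s

end UpperEstimates

theorem exists_lp_bound_of_isDStarRep_harmonic {p : ℝ} (hp : 1 < p) {D : Type*}
    [NormedAddCommGroup D] [NormedSpace ℝ D] {j : D →ₗ[ℝ] (ℕ → ℝ)}
    (hj : IsDStarRep (fun n => 1 / (n + 1 : ℝ)) D j) :
    ∃ K, ∀ (x : D) (s : Finset ℕ), (∑ k ∈ s, |j x k| ^ p) ^ (1 / p) ≤ K * ‖x‖ := by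
  obtain ⟨-, hrange, hnorm⟩ := hj
  have hS := summable_harmonic_div_rpow hp
  set S := ∑' m : ℕ, ((∑ k ∈ range (m + 1), 1 / ((k : ℝ) + 1)) / (m + 1)) ^ p
  refine ⟨S ^ (1 / p), fun x s => ?_⟩
  have hx : j x ∈ dStarSet (fun n => 1 / (n + 1 : ℝ)) := hrange ▸ Set.mem_range_self x
  have hsum : ∑ k ∈ s, |j x k| ^ p ≤ ‖x‖ ^ p * S := by
    refine (sum_abs_rpow_le_of_mem_dStarSet (fun n => by positivity) hx (by positivity) s).trans ?_
    rw [← hnorm x]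
    exact mul_le_mul_of_nonneg_left (hS.sum_le_tsum _ fun m _ => by positivity) (by positivity)
  calc (∑ k ∈ s, |j x k| ^ p) ^ (1 / p) ≤ (‖x‖ ^ p * S) ^ (1 / p) := by gcongr
    _ = S ^ (1 / p) * ‖x‖ := by
        rw [Real.mul_rpow (by positivity) (tsum_nonneg fun m => by positivity), one_div,
          Real.rpow_rpow_inv (norm_nonneg x) (by positivity), mul_comm]

theorem exists_operator_from_G_general (Y : Type*) [NormedAddCommGroup Y]
    [NormedSpace ℝ Y] [CompleteSpace Y] (p : ℝ) (hp : 1 < p)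
    (y : ℕ → Y) (hnorm : ∀ n, ‖y n‖ = 1) (hup : HasUpperPEstimates p y)
    (D : Type*) [NormedAddCommGroup D] [NormedSpace ℝ D]
    (j : D →ₗ[ℝ] (ℕ → ℝ)) (hj : IsDStarRep (fun n => 1 / (n + 1 : ℝ)) D j) :
    ∃ T : D →L[ℝ] Y, ∀ (n : ℕ) (x : D),
      j x = (Pi.single n 1 : ℕ → ℝ) → ‖T x‖ = 1 := by
  obtain ⟨K, hK⟩ := exists_lp_bound_of_isDStarRep_harmonic hp hj
  obtain ⟨T, hT⟩ := exists_clm_hasSum_of_hasUpperPEstimates (by positivity) hup j hK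
  refine ⟨T, fun n x hx => ?_⟩
  have hTx : HasSum (fun k => j x k • y k) (y n) := by
    simpa [hx] using hasSum_single (f := fun k => (Pi.single n 1 : ℕ → ℝ) k • y k) n
      fun k hk => by simp [hk]
  rw [(hT x).unique hTx, hnorm]

/-- if `Y` contains a normalized sequence with upper `p`-estimates
(`1 < p < ∞`), then there is a bounded linear operator `T` from Gowers' space
`G = d_*((1/n)_n)` into `Y` with `‖T e_n‖ = 1` for all `n` (here `G` is represented by
any Banach space `D` isometrically identified with it via `j`). -/
theorem exists_operator_from_G (Y : Type*) [NormedAddCommGroup Y]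
    [NormedSpace ℝ Y] [CompleteSpace Y] (p : ℝ) (hp : 1 < p)
    (y : ℕ → Y) (hnorm : ∀ n, ‖y n‖ = 1) (hup : HasUpperPEstimates p y)
    (D : Type*) [NormedAddCommGroup D] [NormedSpace ℝ D] [CompleteSpace D]
    (j : D →ₗ[ℝ] (ℕ → ℝ)) (hj : IsDStarRep (fun n => 1 / (n + 1 : ℝ)) D j) :
    ∃ T : D →L[ℝ] Y, ∀ (n : ℕ) (x : D),
      j x = (Pi.single n 1 : ℕ → ℝ) → ‖T x‖ = 1 :=
  exists_operator_from_G_general Y p hp y hnorm hup D j hj
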